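/- arXiv:math/0407292 — 6 statements merged into one kernel-verified Lean document; each statement's English description precedes it below -/
import Mathlib

section
/- Let G be a maximal nontraceable graph and let Q be a path in G. If the subgraph of G induced by the vertex set of Q is not a complete graph, then some internal vertex of Q (a vertex of Q other than its two endvertices) has a neighbour in G outside the vertex set of Q. -/
open SimpleGraph

/-- A graph is traceable if it has a Hamiltonian path, i.e. a path containing
all the vertices of the graph. -/
def Traceable {V : Type*} (G : SimpleGraph V) : Prop :=
  ∃ (u v : V) (p : G.Walk u v), p.IsPath ∧ ∀ w, w ∈ p.support

/-- A graph is maximal nontraceable if it is not traceable, but adding any edge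
of the complement produces a traceable graph. -/
def MaxNontraceable {V : Type*} (G : SimpleGraph V) : Prop :=
  ¬ Traceable G ∧ ∀ u v : V, u ≠ v → ¬ G.Adj u v → Traceable (G ⊔ SimpleGraph.edge u v)

/-!
Suppose that no interior vertex of the `u`–`v` path `p` has a neighbour off `p`, and let `ab` be
a non-edge with `a, b` on `p`. A Hamiltonian path of `G + ab` has to use `ab`, so deleting that
edge leaves two paths of `G` that cover all vertices and whose ends at the deleted edge lie on `p`.
Now delete the interior vertices of `p` from both paths. A path can only enter or leave the
interior of `p` through `u` or `v`, so in the two resulting lists consecutive vertices are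
adjacent in `G` or form the pair `u, v`, and the ends at the deleted edge are `u` or `v`.
Cutting these lists at `u` and `v` and splicing `p` in between gives a Hamiltonian path of `G`.
-/
namespace List

variable {α : Type*} {R : α → α → Prop}

theorem IsChain.and_ne {l : List α} (hl : l.IsChain R) (hnd : l.Nodup) :
    l.IsChain fun x y => R x y ∧ x ≠ y := by
  induction hl with grind

variable {p : α → Bool} {E : α → Prop}

theorem IsChain.head?_filter_of_boundary (hR : ∀ x y, R x y → p x = false → p y → E y)
    {l : List α} (hl : l.IsChain R) (hhead : ∀ x ∈ l.head?, p x = false ∨ E x) :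
    ∀ y ∈ (l.filter p).head?, E y := by
  induction l with
  | nil => simp
  | cons z l ih =>
    intro y hy
    by_cases hz : p z
    · obtain rfl : z = y := by simpa [hz] using hy
      simpa [hz] using hhead z rfl
    · rw [filter_cons_of_neg hz] at hy
      refine ih hl.tail (fun w hw => ?_) y hy
      cases hw' : p w
      · exact .inl rfl
      · exact .inr (hR z w (hl.rel_head? hw) (by simpa using hz) hw')

/-- Deleting the elements outside `p` from an `R`-chain makes two elements consecutive only across
a deleted block, and `hR`, `hR'` force both ends of such a block into `E`. -/
theorem IsChain.filter_of_boundary (hR : ∀ x y, R x y → p x → p y = false → E x)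
    (hR' : ∀ x y, R x y → p x = false → p y → E y) {l : List α} (hl : l.IsChain R) :
    (l.filter p).IsChain fun x y => R x y ∨ E x ∧ E y := by
  induction l with
  | nil => simp
  | cons z l ih =>
    by_cases hz : p z
    · rw [filter_cons_of_pos hz, List.isChain_cons]
      refine ⟨?_, ih hl.tail⟩
      cases l with
      | nil => simp
      | cons w l =>
        cases hw : p w
        · exact fun y hy => .inr ⟨hR z w hl.rel hz hw,
            hl.tail.head?_filter_of_boundary hR' (fun _ h => by simp_all) y hy⟩
        · intro y hy
          obtain rfl : w = y := by simpa [hw] using hy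
          exact .inl hl.rel
    · rw [filter_cons_of_neg hz]
      exact ih hl.tail

end List

section

variable {V : Type*} {G : SimpleGraph V}

theorem List.IsChain.reverse_adj {l : List V} (hl : l.IsChain G.Adj) :
    l.reverse.IsChain G.Adj :=
  List.isChain_reverse.mpr (hl.imp fun _ _ h => h.symm)

theorem List.IsChain.adj_of_sup_edge {a b : V} {l : List V}
    (hl : l.IsChain (G ⊔ edge a b).Adj) (h : a ∉ l ∨ b ∉ l) : l.IsChain G.Adj :=
  hl.imp_of_mem_imp fun x y hx hy hxy => by
    rw [sup_adj, edge_adj] at hxy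
    grind

theorem List.IsChain.exists_eq_append_of_sup_edge {a b : V} {l : List V}
    (hl : l.IsChain (G ⊔ edge a b).Adj) :
    l.IsChain G.Adj ∨ ∃ l₁ l₂ x y, l = l₁ ++ x :: y :: l₂ ∧ (edge a b).Adj x y := by
  induction l with
  | nil => simp
  | cons z l ih =>
    cases l with
    | nil => simp
    | cons w l =>
      rw [List.isChain_cons_cons] at hl
      rcases hl.1 with hzw | hzw
      · rcases ih hl.2 with hG | ⟨l₁, l₂, x, y, hl₁, hxy⟩
        · exact .inl (hG.cons_cons hzw)
        · exact .inr ⟨z :: l₁, l₂, x, y, by rw [hl₁]; rfl, hxy⟩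
      · exact .inr ⟨[], l, z, w, rfl, hzw⟩

theorem List.IsChain.adj_split_of_sup_edge {a b x y : V} {l₁ l₂ : List V}
    (hl : (l₁ ++ x :: y :: l₂).IsChain (G ⊔ edge a b).Adj) (hnd : (l₁ ++ x :: y :: l₂).Nodup)
    (hxy : (edge a b).Adj x y) : (l₁ ++ [x]).IsChain G.Adj ∧ (y :: l₂).IsChain G.Adj := by
  rw [List.isChain_append_cons_cons] at hl
  rw [edge_adj] at hxy
  simp only [List.nodup_append, List.nodup_cons, List.mem_cons] at hnd
  exact ⟨hl.1.adj_of_sup_edge (by grind), hl.2.2.adj_of_sup_edge (by grind)⟩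

theorem traceable_of_isChain {l : List V} (hne : l ≠ []) (hl : l.IsChain G.Adj) (hnd : l.Nodup)
    (hcov : ∀ x, x ∈ l) : Traceable G :=
  ⟨_, _, Walk.ofSupport l hne hl, by rwa [Walk.isPath_def, Walk.support_ofSupport],
    by simpa using hcov⟩

theorem traceable_of_path_extension {x y : V} (hxy : x ≠ y) (q : G.Walk x y) (hq : q.IsPath)
    {M₁ M₂ : List V} (h₁ : (M₁ ++ [x]).IsChain (G ⊔ edge x y).Adj)
    (h₂ : (y :: M₂).IsChain (G ⊔ edge x y).Adj) (hnd : (M₁ ++ M₂).Nodup)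
    (hdisj : ∀ z ∈ M₁ ++ M₂, z ∉ q.support) (hcov : ∀ z, z ∈ q.support ∨ z ∈ M₁ ++ M₂) :
    Traceable G := by
  have h₁' := h₁.adj_of_sup_edge (.inr fun hy => by
    simp only [List.mem_append, List.mem_singleton] at hy
    grind [Walk.end_mem_support])
  have h₂' := h₂.adj_of_sup_edge (.inl fun hx => by
    simp only [List.mem_cons] at hx
    grind [Walk.start_mem_support])
  have hhead : q.support = x :: q.support.tail := q.cons_tail_support.symm
  have hlast : q.support = q.support.dropLast ++ [y] := by simp
  refine traceable_of_isChain (l := M₁ ++ q.support ++ M₂) (by simp) ?_ ?_ (by grind)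
  · have hq' : (q.support ++ M₂).IsChain G.Adj := by
      rw [hlast, List.append_assoc, List.singleton_append, List.isChain_split, ← hlast]
      exact ⟨q.isChain_adj_support, h₂'⟩
    rw [hhead, List.append_assoc, List.cons_append, List.isChain_split, ← List.cons_append,
      ← hhead]
    exact ⟨h₁', hq'⟩
  · simp only [List.nodup_append] at hnd ⊢
    grind [hq.support_nodup]

theorem traceable_of_splice_cons_cons {u v : V} (p : G.Walk u v) (hp : p.IsPath)
    {M₁ M₂ : List V} {x y : V} (hx : x = u ∨ x = v) (hy : y = u ∨ y = v)
    (h₁ : (M₁ ++ [x]).IsChain (G ⊔ edge u v).Adj) (h₂ : (y :: M₂).IsChain (G ⊔ edge u v).Adj)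
    (hnd : (M₁ ++ x :: y :: M₂).Nodup)
    (hmem : ∀ z, z ∈ M₁ ++ x :: y :: M₂ ↔ z ∉ p.support ∨ z = u ∨ z = v) : Traceable G := by
  simp only [List.nodup_append, List.nodup_cons, List.mem_cons] at hnd
  have hxy : x ≠ y := by grind
  have hnd' : (M₁ ++ M₂).Nodup := by simp only [List.nodup_append]; grind
  have hdisj : ∀ z ∈ M₁ ++ M₂, z ∉ p.support := fun z hz hzp => by
    have := (hmem z).mp (by simp only [List.mem_append, List.mem_cons] at hz ⊢; tauto)
    grind
  have hcov : ∀ z, z ∈ p.support ∨ z ∈ M₁ ++ M₂ := fun z => by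
    by_cases hz : z ∈ p.support
    · exact .inl hz
    · have := (hmem z).mpr (.inl hz)
      grind [Walk.start_mem_support, Walk.end_mem_support]
  rcases hx with rfl | rfl
  · obtain rfl : y = v := by grind
    exact traceable_of_path_extension hxy p hp h₁ h₂ hnd' hdisj hcov
  · obtain rfl : y = u := by grind
    rw [edge_comm] at h₁ h₂
    exact traceable_of_path_extension hxy p.reverse hp.reverse h₁ h₂ hnd'
      (by simpa using hdisj) (by simpa using hcov)

theorem traceable_of_splice_of_getLast? {u v : V} (huv : u ≠ v) (p : G.Walk u v)
    (hp : p.IsPath) {L : List V} (hL : L.IsChain (G ⊔ edge u v).Adj) (hnd : L.Nodup)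
    (hlast : ∀ x ∈ L.getLast?, x = u ∨ x = v)
    (hmem : ∀ z, z ∈ L ↔ z ∉ p.support ∨ z = u ∨ z = v) : Traceable G := by
  obtain ⟨K, x, rfl⟩ : ∃ K x, L = K ++ [x] := by
    rcases L.eq_nil_or_concat with h | ⟨K, x, h⟩
    · simpa [h] using (hmem u).mpr (by simp)
    · exact ⟨K, x, by simpa using h⟩
  have hx : x = u ∨ x = v := hlast x (by simp)
  obtain ⟨y, hy, hyx⟩ : ∃ y, (y = u ∨ y = v) ∧ y ≠ x := by
    rcases hx with rfl | rfl
    exacts [⟨v, .inr rfl, huv.symm⟩, ⟨u, .inl rfl, huv⟩]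
  obtain ⟨N, M, rfl⟩ : ∃ N M, K = N ++ y :: M :=
    List.append_of_mem (by simpa [hyx] using (hmem y).mpr (.inr hy))
  have hperm : (N ++ y :: M ++ [x]).Perm (N ++ y :: x :: M.reverse) := by
    rw [List.append_assoc, List.cons_append]
    exact (((List.perm_append_singleton x M).trans
      ((List.reverse_perm M).symm.cons x)).cons y).append_left N
  rw [List.append_assoc, List.cons_append, List.isChain_split] at hL
  refine traceable_of_splice_cons_cons p hp hy hx hL.1 ?_ (hperm.nodup_iff.mp hnd)
    fun z => hperm.mem_iff.symm.trans (hmem z)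
  simpa using hL.2.tail.reverse_adj

theorem traceable_of_splice_append {u v : V} (huv : u ≠ v) (p : G.Walk u v) (hp : p.IsPath)
    {L₁ L₂ : List V} (h₁ : L₁.IsChain (G ⊔ edge u v).Adj) (h₂ : L₂.IsChain (G ⊔ edge u v).Adj)
    (hnd : (L₁ ++ L₂).Nodup) (hlast : ∀ x ∈ L₁.getLast?, x = u ∨ x = v)
    (hhead : ∀ y ∈ L₂.head?, y = u ∨ y = v)
    (hmem : ∀ z, z ∈ L₁ ++ L₂ ↔ z ∉ p.support ∨ z = u ∨ z = v) : Traceable G := by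
  rcases L₂ with _ | ⟨y, M₂⟩
  · simp only [List.append_nil] at hnd hmem
    exact traceable_of_splice_of_getLast? huv p hp h₁ hnd hlast hmem
  rcases L₁.eq_nil_or_concat with rfl | ⟨M₁, x, rfl⟩
  · simp only [List.nil_append] at hnd hmem
    exact traceable_of_splice_of_getLast? huv p hp h₂.reverse_adj (List.nodup_reverse.mpr hnd)
      (by simpa using hhead) fun z => List.mem_reverse.trans (hmem z)
  · simp only [List.concat_eq_append, List.append_assoc, List.cons_append, List.nil_append]
      at h₁ hlast hnd hmem
    exact traceable_of_splice_cons_cons p hp (hlast x (by simp)) (hhead y rfl) h₁ h₂ hnd hmem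

theorem traceable_of_split_of_no_exit {u v : V} (huv : u ≠ v) (p : G.Walk u v) (hp : p.IsPath)
    (hexit : ∀ x ∈ p.support, x ≠ u → x ≠ v → ∀ w, G.Adj x w → w ∈ p.support)
    {A B : List V} (hA : A.IsChain G.Adj) (hB : B.IsChain G.Adj) (hnd : (A ++ B).Nodup)
    (hcov : ∀ z, z ∈ A ++ B) (hAlast : ∀ x ∈ A.getLast?, x ∈ p.support)
    (hBhead : ∀ y ∈ B.head?, y ∈ p.support) : Traceable G := by
  classical
  set T : V → Bool := fun z => decide (z ∉ p.support ∨ z = u ∨ z = v) with hT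
  have hR : ∀ x y, G.Adj x y → T x → T y = false → x = u ∨ x = v := by
    intro x y hxy hx hy
    simp only [hT, decide_eq_true_eq, decide_eq_false_iff_not, not_or, not_not] at hx hy
    have := hexit y hy.1 hy.2.1 hy.2.2 x hxy.symm
    tauto
  have hR' : ∀ x y, G.Adj x y → T x = false → T y → y = u ∨ y = v :=
    fun x y hxy hx hy => hR y x hxy.symm hy hx
  have hfilter : ∀ {l : List V}, l.IsChain G.Adj → l.Nodup →
      (l.filter T).IsChain (G ⊔ edge u v).Adj := fun hl hnd =>
    ((hl.filter_of_boundary hR hR').and_ne (hnd.filter _)).imp fun x y ⟨h, hne⟩ => by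
      rw [sup_adj, edge_adj]
      grind
  have hboundary : ∀ x ∈ p.support, T x = false ∨ x = u ∨ x = v := by
    intro x hx
    by_cases h : x = u ∨ x = v
    · exact .inr h
    · simp_all
  refine traceable_of_splice_append huv p hp (L₁ := A.filter T) (L₂ := B.filter T)
    (hfilter hA (List.nodup_append.mp hnd).1) (hfilter hB (List.nodup_append.mp hnd).2.1)
    (by rw [← List.filter_append]; exact hnd.filter _) ?_
    (hB.head?_filter_of_boundary hR' fun y hy => hboundary y (hBhead y hy)) fun z => ?_
  · rw [← List.head?_reverse, ← List.filter_reverse]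
    refine hA.reverse_adj.head?_filter_of_boundary hR' fun x hx => hboundary x (hAlast x ?_)
    rwa [List.head?_reverse] at hx
  · rw [← List.filter_append, List.mem_filter]
    simpa [hT] using fun _ => hcov z

end

theorem stmt_0_general {V : Type*} (G : SimpleGraph V)
    (hG : MaxNontraceable G) {u v : V} (p : G.Walk u v) (hp : p.IsPath)
    (hnc : ¬ ∀ x ∈ p.support, ∀ y ∈ p.support, x ≠ y → G.Adj x y) :
    ∃ x ∈ p.support, x ≠ u ∧ x ≠ v ∧ ∃ w, G.Adj x w ∧ w ∉ p.support := by
  by_contra! hexit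
  obtain ⟨a, ha, b, hb, hab, hnadj⟩ :
      ∃ a ∈ p.support, ∃ b ∈ p.support, a ≠ b ∧ ¬ G.Adj a b := by
    simpa using hnc
  have huv : u ≠ v := by
    rintro rfl
    simp only [Walk.nil_iff_support_eq.mp (Walk.isPath_iff_nil.mp hp), List.mem_singleton] at ha hb
    exact hab (ha.trans hb.symm)
  obtain ⟨_, _, P, hP, hPcov⟩ := hG.2 a b hab hnadj
  have hnd := hP.support_nodup
  have hchain := P.isChain_adj_support
  rcases hchain.exists_eq_append_of_sup_edge with hG' | ⟨l₁, l₂, x, y, hl, hxy⟩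
  · exact hG.1 (traceable_of_isChain P.support_ne_nil hG' hnd hPcov)
  rw [hl] at hnd hchain hPcov
  obtain ⟨hA, hB⟩ := hchain.adj_split_of_sup_edge hnd hxy
  obtain ⟨hx, hy⟩ : x ∈ p.support ∧ y ∈ p.support := by
    rw [edge_adj] at hxy
    grind
  exact hG.1 (traceable_of_split_of_no_exit huv p hp hexit hA hB (by simpa using hnd)
    (by simpa using hPcov) (by simpa using hx) (by simpa using hy))

/-- If Q is a path in a MNT graph G and the subgraph induced by V(Q) is not complete,
then some internal vertex of Q has a neighbour in G − V(Q). -/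
theorem stmt_0 {V : Type*} [Fintype V] (G : SimpleGraph V)
    (hG : MaxNontraceable G) {u v : V} (p : G.Walk u v) (hp : p.IsPath)
    (hnc : ¬ ∀ x ∈ p.support, ∀ y ∈ p.support, x ≠ y → G.Adj x y) :
    ∃ x ∈ p.support, x ≠ u ∧ x ≠ v ∧ ∃ w, G.Adj x w ∧ w ∉ p.support :=
  stmt_0_general G hG p hp hnc
end

section
/- Let G be a connected maximal nontraceable graph and let T be a cutset of G (a set of vertices whose removal disconnects G). Then the number of connected components of G − T is at most |T| + 2. -/
/-!
If `G − T` is disconnected, pick `a`, `b` in different components. They are not adjacent, so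
`G + ab` has a Hamiltonian path. Deleting `T` cuts that path into at most `|T| + 1` segments, each
lying in one component of `(G + ab) − T`, and each component contains one of them; adding the
single edge `ab` merges at most two components of `G − T`.
-/

open SimpleGraph

namespace List

variable {β : Type*} [DecidableEq β]

/- Counting only the `none`s of the tail is the strengthening that makes the induction work. -/
theorem card_toFinset_reduceOption_cons_le (x : Option β) (l : List (Option β))
    (h : (x :: l).IsChain fun a b => ∀ c ∈ a, ∀ d ∈ b, c = d) :
    (x :: l).reduceOption.toFinset.card ≤ l.count none + 1 := by
  induction l generalizing x with
  | nil => cases x <;> simp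
  | cons y l ih =>
    rw [isChain_cons_cons] at h
    have hy := ih y h.2
    cases x with
    | none =>
      rw [reduceOption_cons_of_none]
      exact hy.trans (by simp [count_cons])
    | some b =>
      rw [reduceOption_cons_of_some, toFinset_cons]
      cases y with
      | none =>
        refine (Finset.card_insert_le _ _).trans ?_
        simp only [count_cons_self]
        omega
      | some c =>
        obtain rfl : b = c := h.1 b rfl c rfl
        rw [Finset.insert_eq_of_mem (by simp [reduceOption_mem_iff])]
        simpa using hy

theorem card_toFinset_reduceOption_le {l : List (Option β)}
    (h : l.IsChain fun a b => ∀ c ∈ a, ∀ d ∈ b, c = d) :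
    l.reduceOption.toFinset.card ≤ l.count none + 1 := by
  cases l with
  | nil => simp
  | cons x l => exact (card_toFinset_reduceOption_cons_le x l h).trans (by simp [count_cons])

end List

namespace SimpleGraph

variable {V : Type*}

theorem Reachable.of_sup_edge {G : SimpleGraph V} {a b x y : V}
    (h : (G ⊔ edge a b).Reachable x y) (ha : ¬G.Reachable x a) (hb : ¬G.Reachable x b) :
    G.Reachable x y := by
  rw [reachable_iff_reflTransGen] at h
  induction h with
  | refl => rfl
  | tail _ hyz ih =>
    rcases hyz with hyz | hyz
    · exact ih.trans hyz.reachable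
    · rw [edge_adj] at hyz
      rcases hyz.1 with ⟨rfl, -⟩ | ⟨rfl, -⟩
      exacts [absurd ih ha, absurd ih hb]

theorem card_connectedComponent_le_card_sup_edge_add_one (G : SimpleGraph V) (a b : V) :
    Nat.card G.ConnectedComponent ≤ Nat.card (G ⊔ edge a b).ConnectedComponent + 1 := by
  classical
  set φ := ConnectedComponent.map (Hom.ofLE (le_sup_left : G ≤ G ⊔ edge a b))
  have hφ : Function.Surjective φ := ConnectedComponent.surjective_map_ofLE _
  by_cases hfin : Finite (G ⊔ edge a b).ConnectedComponent
  swap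
  · have : Infinite (G ⊔ edge a b).ConnectedComponent := not_finite_iff_infinite.mp hfin
    have : Infinite G.ConnectedComponent := .of_surjective φ hφ
    simp [Nat.card_eq_zero_of_infinite]
  -- `φ` is injective away from the component of `b`.
  have hreach : ∀ x y : V, (G ⊔ edge a b).Reachable x y → ¬G.Reachable x b →
      ¬G.Reachable y b → G.Reachable x y := by
    intro x y hxy hxb hyb
    by_cases hxa : G.Reachable x a
    · by_cases hya : G.Reachable y a
      · exact hxa.trans hya.symm
      · exact (hxy.symm.of_sup_edge hya hyb).symm
    · exact hxy.of_sup_edge hxa hxb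
  let g : G.ConnectedComponent → Option (G ⊔ edge a b).ConnectedComponent := fun C =>
    if C = G.connectedComponentMk b then none else some (φ C)
  refine (Nat.card_le_card_of_injective g ?_).trans_eq Finite.card_option
  intro C C' hCC'
  induction C using ConnectedComponent.ind with | h x => ?_
  induction C' using ConnectedComponent.ind with | h y => ?_
  by_cases hx : G.Reachable x b <;> by_cases hy : G.Reachable y b
  · exact ConnectedComponent.sound (hx.trans hy.symm)
  · simp [g, ConnectedComponent.eq, hx, hy] at hCC'
  · simp [g, ConnectedComponent.eq, hx, hy] at hCC'
  · simp only [g, φ, ConnectedComponent.eq, hx, hy, if_false, Option.some.injEq,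
      ConnectedComponent.map_mk, Hom.coe_ofLE, id] at hCC'
    exact ConnectedComponent.sound (hreach x y hCC' hx hy)

theorem induce_sup_edge (G : SimpleGraph V) (s : Set V) (a b : s) :
    (G ⊔ edge (a : V) b).induce s = G.induce s ⊔ edge a b := by
  ext x y
  simp [edge_adj, Subtype.ext_iff]

end SimpleGraph

theorem Traceable.card_connectedComponent_induce_compl_le {V : Type*} {G : SimpleGraph V}
    (hG : Traceable G) (S : Finset V) :
    Nat.card (G.induce (↑S : Set V)ᶜ).ConnectedComponent ≤ S.card + 1 := by
  classical
  obtain ⟨u, v, p, hp, hspan⟩ := hG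
  set K := G.induce (↑S : Set V)ᶜ
  let f : V → Option K.ConnectedComponent := fun x =>
    if hx : x ∈ S then none else some (K.connectedComponentMk ⟨x, hx⟩)
  set l := p.support.map f
  have hcover : ∀ C, C ∈ l.reduceOption.toFinset := by
    intro C
    induction C using ConnectedComponent.ind with | h x => ?_
    obtain ⟨x, hx⟩ := x
    simp only [List.mem_toFinset, List.reduceOption_mem_iff, l, List.mem_map]
    have hx' : x ∉ S := hx
    exact ⟨x, hspan x, by simp [f, hx']⟩
  have hchain : l.IsChain fun a b => ∀ c ∈ a, ∀ d ∈ b, c = d := by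
    refine List.isChain_map_of_isChain f ?_ p.isChain_adj_support
    intro x y hxy c hc d hd
    by_cases hx : x ∈ S
    · simp [f, hx] at hc
    by_cases hy : y ∈ S
    · simp [f, hy] at hd
    simp only [f, hx, hy, dite_false, Option.mem_def, Option.some.injEq] at hc hd
    subst hc hd
    exact ConnectedComponent.sound (show K.Adj ⟨x, hx⟩ ⟨y, hy⟩ from hxy).reachable
  have hnone : l.count none ≤ S.card := calc
    l.count none = p.support.countP (· ∈ S) := by
      simp only [l, List.count, List.countP_map]
      congr; funext x; by_cases hx : x ∈ S <;> simp [f, hx]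
    _ = (p.support.filter (· ∈ S)).length := List.countP_eq_length_filter
    _ = (p.support.filter (· ∈ S)).toFinset.card :=
      (List.toFinset_card_of_nodup (hp.support_nodup.filter _)).symm
    _ ≤ S.card := Finset.card_le_card fun x => by simp
  calc Nat.card K.ConnectedComponent ≤ l.reduceOption.toFinset.card :=
        (Nat.card_le_card_of_surjective (Subtype.val : l.reduceOption.toFinset → _)
          fun C => ⟨⟨C, hcover C⟩, rfl⟩).trans_eq (Nat.card_eq_finsetCard _)
    _ ≤ l.count none + 1 := List.card_toFinset_reduceOption_le hchain
    _ ≤ S.card + 1 := by omega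

theorem stmt_2_general {V : Type*} (G : SimpleGraph V)
    (hG : MaxNontraceable G) (T : Finset V) :
    Nat.card (G.induce ((↑T : Set V)ᶜ)).ConnectedComponent ≤ T.card + 2 := by
  by_cases hpre : (G.induce ((↑T : Set V)ᶜ)).Preconnected
  · have := hpre.subsingleton_connectedComponent
    have := Finite.card_le_one_iff_subsingleton.mpr this
    omega
  obtain ⟨a, b, hab⟩ : ∃ a b, ¬(G.induce ((↑T : Set V)ᶜ)).Reachable a b := by
    simpa [Preconnected] using hpre
  have hne : (a : V) ≠ b := fun h => hab (Subtype.ext h ▸ Reachable.refl a)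
  have hnadj : ¬G.Adj a b := fun h => hab (show (G.induce _).Adj a b from h).reachable
  have htrace := (hG.2 a b hne hnadj).card_connectedComponent_induce_compl_le T
  calc _ ≤ Nat.card (G.induce ((↑T : Set V)ᶜ) ⊔ edge a b).ConnectedComponent + 1 :=
        card_connectedComponent_le_card_sup_edge_add_one _ a b
    _ = Nat.card ((G ⊔ edge (a : V) b).induce ((↑T : Set V)ᶜ)).ConnectedComponent + 1 := by
        rw [induce_sup_edge]
    _ ≤ T.card + 2 := by omega

/-- If T is a cutset of a connected MNT graph G, then G − T has at most |T| + 2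
connected components. -/
theorem stmt_2 {V : Type*} [Fintype V] (G : SimpleGraph V)
    (hc : G.Connected) (hG : MaxNontraceable G) (T : Finset V)
    (hcut : ¬ (G.induce ((↑T : Set V)ᶜ)).Connected) :
    Nat.card (G.induce ((↑T : Set V)ᶜ)).ConnectedComponent ≤ T.card + 2 :=
  stmt_2_general G hG T
end

section
/- Let G be a connected maximal nontraceable graph and let T be a cutset of G such that G − T has exactly |T| + 2 connected components. Then for every connected component A of G − T, the subgraph of G induced by T ∪ A is a complete graph. -/
open SimpleGraph

open Classical in
private lemma walk_bound {V : Type*} [Fintype V] (H : SimpleGraph V) (T : Finset V)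
    {u v : V} (p : H.Walk u v) :
    p.IsPath →
    {C : (H.induce ((↑T : Set V)ᶜ)).ConnectedComponent |
        ∃ a, ∃ ha : a ∈ ((↑T : Set V)ᶜ),
          a ∈ p.support ∧ (H.induce ((↑T : Set V)ᶜ)).connectedComponentMk ⟨a, ha⟩ = C}.ncard
      + (if u ∈ T then 1 else 0) ≤ (p.support.toFinset ∩ T).card + 1 := by
  induction p with
  | @nil w =>
    intro _
    by_cases hw : w ∈ T
    · have hset : {C : (H.induce ((↑T : Set V)ᶜ)).ConnectedComponent |
          ∃ a, ∃ ha : a ∈ ((↑T : Set V)ᶜ),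
            a ∈ (Walk.nil : H.Walk w w).support ∧
              (H.induce ((↑T : Set V)ᶜ)).connectedComponentMk ⟨a, ha⟩ = C} = ∅ := by
        ext C
        simp only [Set.mem_setOf_eq, Set.mem_empty_iff_false, iff_false]
        rintro ⟨a, ha, hmem, -⟩
        simp only [Walk.support_nil, List.mem_singleton] at hmem
        subst hmem
        exact ha (by simpa using hw)
      rw [hset]
      simp [hw]
    · have hw' : w ∈ ((↑T : Set V)ᶜ) := by simpa using hw
      have hsub : {C : (H.induce ((↑T : Set V)ᶜ)).ConnectedComponent |
          ∃ a, ∃ ha : a ∈ ((↑T : Set V)ᶜ),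
            a ∈ (Walk.nil : H.Walk w w).support ∧
              (H.induce ((↑T : Set V)ᶜ)).connectedComponentMk ⟨a, ha⟩ = C} ⊆
            {(H.induce ((↑T : Set V)ᶜ)).connectedComponentMk ⟨w, hw'⟩} := by
        rintro C ⟨a, ha, hmem, hC⟩
        simp only [Walk.support_nil, List.mem_singleton] at hmem
        subst hmem
        simp [← hC]
      have := Set.ncard_le_ncard hsub (Set.toFinite _)
      simp only [Set.ncard_singleton] at this
      simp only [hw, if_false]
      omega
  | @cons u b vv h q ih =>
    intro hp
    have hp' : q.IsPath := (Walk.cons_isPath_iff h q).mp hp |>.1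
    have hu : u ∉ q.support := (Walk.cons_isPath_iff h q).mp hp |>.2
    have ihq := ih hp'
    set A := {C : (H.induce ((↑T : Set V)ᶜ)).ConnectedComponent |
        ∃ a, ∃ ha : a ∈ ((↑T : Set V)ᶜ),
          a ∈ q.support ∧ (H.induce ((↑T : Set V)ᶜ)).connectedComponentMk ⟨a, ha⟩ = C} with hAdef
    set A' := {C : (H.induce ((↑T : Set V)ᶜ)).ConnectedComponent |
        ∃ a, ∃ ha : a ∈ ((↑T : Set V)ᶜ),
          a ∈ (Walk.cons h q).support ∧
            (H.induce ((↑T : Set V)ᶜ)).connectedComponentMk ⟨a, ha⟩ = C} with hA'def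
    have hsupp : (Walk.cons h q).support.toFinset = insert u q.support.toFinset := by
      simp [Walk.support_cons]
    by_cases huT : u ∈ T
    · -- u ∈ T
      have hA : A' = A := by
        ext C
        constructor
        · rintro ⟨a, ha, hmem, hC⟩
          simp only [Walk.support_cons, List.mem_cons] at hmem
          rcases hmem with rfl | hmem
          · exact absurd (by simpa using huT) (by simpa using ha)
          · exact ⟨a, ha, hmem, hC⟩
        · rintro ⟨a, ha, hmem, hC⟩
          exact ⟨a, ha, by simp [Walk.support_cons, hmem], hC⟩
      have hcard : ((Walk.cons h q).support.toFinset ∩ T).card =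
          (q.support.toFinset ∩ T).card + 1 := by
        rw [hsupp, Finset.insert_inter_of_mem huT,
          Finset.card_insert_of_notMem (by simp [hu])]
      rw [hA, hcard]
      simp only [huT, if_true]
      split_ifs at ihq <;> omega
    · -- u ∉ T
      have hu' : u ∈ ((↑T : Set V)ᶜ) := by simpa using huT
      have hcard : ((Walk.cons h q).support.toFinset ∩ T).card =
          (q.support.toFinset ∩ T).card := by
        rw [hsupp, Finset.insert_inter_of_notMem huT]
      rw [hcard]
      simp only [huT, if_false]
      by_cases hbT : b ∈ T
      · have hsub : A' ⊆ insert ((H.induce ((↑T : Set V)ᶜ)).connectedComponentMk ⟨u, hu'⟩) A := by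
          rintro C ⟨a, ha, hmem, hC⟩
          simp only [Walk.support_cons, List.mem_cons] at hmem
          rcases hmem with rfl | hmem
          · exact Or.inl hC.symm
          · exact Or.inr ⟨a, ha, hmem, hC⟩
        have h1 := Set.ncard_le_ncard hsub (Set.toFinite _)
        have h2 := Set.ncard_insert_le
          ((H.induce ((↑T : Set V)ᶜ)).connectedComponentMk ⟨u, hu'⟩) A
        simp only [hbT, if_true] at ihq
        omega
      · have hb' : b ∈ ((↑T : Set V)ᶜ) := by simpa using hbT
        have hadj : (H.induce ((↑T : Set V)ᶜ)).Adj ⟨u, hu'⟩ ⟨b, hb'⟩ := by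
          simpa using h
        have hmk : (H.induce ((↑T : Set V)ᶜ)).connectedComponentMk ⟨u, hu'⟩ =
            (H.induce ((↑T : Set V)ᶜ)).connectedComponentMk ⟨b, hb'⟩ :=
          ConnectedComponent.connectedComponentMk_eq_of_adj hadj
        have hbin : (H.induce ((↑T : Set V)ᶜ)).connectedComponentMk ⟨b, hb'⟩ ∈ A :=
          ⟨b, hb', q.start_mem_support, rfl⟩
        have hA : A' = A := by
          ext C
          constructor
          · rintro ⟨a, ha, hmem, hC⟩
            simp only [Walk.support_cons, List.mem_cons] at hmem
            rcases hmem with rfl | hmem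
            · rw [← hC, hmk]; exact hbin
            · exact ⟨a, ha, hmem, hC⟩
          · rintro ⟨a, ha, hmem, hC⟩
            exact ⟨a, ha, by simp [Walk.support_cons, hmem], hC⟩
        rw [hA]
        simp only [hbT, if_false] at ihq
        omega

open Classical in
private lemma traceable_bound {V : Type*} [Fintype V] (H : SimpleGraph V) (T : Finset V)
    (ht : Traceable H) :
    Nat.card (H.induce ((↑T : Set V)ᶜ)).ConnectedComponent ≤ T.card + 1 := by
  obtain ⟨u, v, p, hp, hall⟩ := ht
  have hb := walk_bound H T p hp
  have huniv : {C : (H.induce ((↑T : Set V)ᶜ)).ConnectedComponent |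
      ∃ a, ∃ ha : a ∈ ((↑T : Set V)ᶜ),
        a ∈ p.support ∧ (H.induce ((↑T : Set V)ᶜ)).connectedComponentMk ⟨a, ha⟩ = C} =
      Set.univ := by
    ext C
    simp only [Set.mem_univ, iff_true]
    obtain ⟨a, rfl⟩ := C.exists_rep
    exact ⟨a.1, a.2, hall _, rfl⟩
  rw [huniv, Set.ncard_univ] at hb
  have hT : (p.support.toFinset ∩ T).card ≤ T.card :=
    Finset.card_le_card (Finset.inter_subset_right)
  split_ifs at hb <;> omega

private lemma reach_of_sup_edge {W : Type*} {H : SimpleGraph W} {x y : W}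
    (hr : H.Reachable x y) {a b : W} (h : (H ⊔ edge x y).Reachable a b) :
    H.Reachable a b := by
  obtain ⟨w⟩ := h
  induction w with
  | nil => exact Reachable.refl _
  | cons hadj q ih =>
    rw [sup_adj, edge_adj] at hadj
    rcases hadj with hadj | ⟨(⟨rfl, rfl⟩ | ⟨rfl, rfl⟩), -⟩
    · exact hadj.reachable.trans ih
    · exact hr.trans ih
    · exact hr.symm.trans ih

private lemma card_cc_sup_edge {W : Type*} (H : SimpleGraph W) {x y : W}
    (hr : H.Reachable x y) :
    Nat.card (H ⊔ edge x y).ConnectedComponent = Nat.card H.ConnectedComponent := by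
  have hbij : Function.Bijective
      (ConnectedComponent.map
        (Hom.ofLE (le_sup_left : H ≤ H ⊔ edge x y))) := by
    constructor
    · intro C D
      refine ConnectedComponent.ind₂ (fun a b hab => ?_) C D
      simp only [ConnectedComponent.map_mk] at hab
      exact ConnectedComponent.sound
        (reach_of_sup_edge hr (ConnectedComponent.exact hab))
    · intro C
      exact ConnectedComponent.ind (fun a => ⟨H.connectedComponentMk a, rfl⟩) C
  exact (Nat.card_eq_of_bijective _ hbij).symm

private lemma induce_sup_edge_eq {V : Type*} (G : SimpleGraph V) (S : Set V) {x y : V}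
    (hxy : x ∉ S ∨ y ∉ S) : (G ⊔ edge x y).induce S = G.induce S := by
  ext a b
  simp only [comap_adj, Function.Embedding.coe_subtype, sup_adj, edge_adj]
  constructor
  · rintro (h | ⟨(⟨hax, hby⟩ | ⟨hay, hbx⟩), -⟩)
    · exact h
    · rcases hxy with hx | hy
      · exact absurd (hax ▸ a.2) hx
      · exact absurd (hby ▸ b.2) hy
    · rcases hxy with hx | hy
      · exact absurd (hbx ▸ b.2) hx
      · exact absurd (hay ▸ a.2) hy
  · exact Or.inl

/-- If T is a cutset of a connected MNT graph G and G − T has exactly |T| + 2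
connected components, then for each component A of G − T the subgraph of G
induced by T ∪ A is complete. -/
theorem stmt_3 {V : Type*} [Fintype V] (G : SimpleGraph V)
    (hc : G.Connected) (hG : MaxNontraceable G) (T : Finset V)
    (hcut : ¬ (G.induce ((↑T : Set V)ᶜ)).Connected)
    (hk : Nat.card (G.induce ((↑T : Set V)ᶜ)).ConnectedComponent = T.card + 2) :
    ∀ C : (G.induce ((↑T : Set V)ᶜ)).ConnectedComponent,
      ∀ x ∈ (↑T : Set V) ∪ Subtype.val '' C.supp,
        ∀ y ∈ (↑T : Set V) ∪ Subtype.val '' C.supp, x ≠ y → G.Adj x y := by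
  intro C x hx y hy hxy
  by_contra hadj
  have htr := hG.2 x y hxy hadj
  have hb := traceable_bound (G ⊔ edge x y) T htr
  have key : Nat.card ((G ⊔ edge x y).induce ((↑T : Set V)ᶜ)).ConnectedComponent =
      T.card + 2 := by
    rcases hx with hxT | ⟨x', hx', rfl⟩
    · rw [induce_sup_edge_eq G ((↑T : Set V)ᶜ) (Or.inl (by simpa using hxT)), hk]
    · rcases hy with hyT | ⟨y', hy', rfl⟩
      · rw [induce_sup_edge_eq G ((↑T : Set V)ᶜ) (Or.inr (by simpa using hyT)), hk]
      · -- both in the same component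
        have hrx : (G.induce ((↑T : Set V)ᶜ)).connectedComponentMk x' = C :=
          (ConnectedComponent.mem_supp_iff C x').mp hx'
        have hry : (G.induce ((↑T : Set V)ᶜ)).connectedComponentMk y' = C :=
          (ConnectedComponent.mem_supp_iff C y').mp hy'
        have hr : (G.induce ((↑T : Set V)ᶜ)).Reachable x' y' :=
          ConnectedComponent.exact (hrx.trans hry.symm)
        have heq : (G ⊔ edge (↑x' : V) (↑y' : V)).induce ((↑T : Set V)ᶜ) =
            (G.induce ((↑T : Set V)ᶜ)) ⊔ edge x' y' := by
          ext a b
          simp only [comap_adj, Function.Embedding.coe_subtype, sup_adj, edge_adj,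
            Subtype.ext_iff, ne_eq]
        rw [heq, card_cc_sup_edge _ hr, hk]
  omega
end

section
/- Let G be a connected maximal nontraceable graph of order n ≥ 6 containing three distinct vertices v₁, v₂, v₃, each of degree 2, all having the same two neighbours x₁ and x₂. Then the graph G − {v₁, v₂, v₃} is a complete graph, and consequently the number of edges of G equals (n² − 7n + 24)/2. -/
open SimpleGraph

lemma getVert_eq_get {V : Type*} {G : SimpleGraph V} {u v : V} (p : G.Walk u v) (i : ℕ)
    (hi : i ≤ p.length) :
    p.getVert i = p.support.get ⟨i, by rw [Walk.length_support]; omega⟩ := by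
  induction p generalizing i with
  | nil =>
    have : i = 0 := by simpa using hi
    subst this; simp
  | cons h q ih =>
    cases i with
    | zero => simp
    | succ i =>
      simp only [Walk.getVert_cons_succ, Walk.support_cons, List.get_cons_succ]
      exact ih i (by simpa using hi)

lemma getVert_inj {V : Type*} {G : SimpleGraph V} {u v : V} {p : G.Walk u v}
    (hp : p.IsPath) {i j : ℕ} (hi : i ≤ p.length) (hj : j ≤ p.length)
    (h : p.getVert i = p.getVert j) : i = j := by
  rw [getVert_eq_get p i hi, getVert_eq_get p j hj] at h
  have h2 := (List.Nodup.get_inj_iff hp.support_nodup).mp h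
  exact congrArg Fin.val h2

lemma key_nontraceable {V : Type*} [Fintype V] (G : SimpleGraph V)
    (hn : 6 ≤ Fintype.card V) (v₁ v₂ v₃ x₁ x₂ : V)
    (hv12 : v₁ ≠ v₂) (hv13 : v₁ ≠ v₃) (hv23 : v₂ ≠ v₃)
    (h1 : G.neighborSet v₁ = {x₁, x₂})
    (h2 : G.neighborSet v₂ = {x₁, x₂})
    (h3 : G.neighborSet v₃ = {x₁, x₂}) : ¬ Traceable G := by
  classical
  rintro ⟨u, w, p, hp, hall⟩
  have hlen : p.length + 1 = Fintype.card V := by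
    have huniv : p.support.toFinset = Finset.univ := by
      ext z; simp [hall z]
    have hcard := List.toFinset_card_of_nodup hp.support_nodup
    rw [huniv, Finset.card_univ, Walk.length_support] at hcard
    omega
  have hL : 5 ≤ p.length := by omega
  set P : ℕ → Prop := fun i => G.neighborSet (p.getVert i) = {x₁, x₂} with hP
  have inj : ∀ i j : ℕ, i ≤ p.length → j ≤ p.length → p.getVert i = p.getVert j → i = j :=
    fun i j hi hj h => getVert_inj hp hi hj h
  have main : ∀ a b c : ℕ, a < b → b < c → c ≤ p.length → P a → P b → P c → False := by
    intro a b c hab hbc hcL Pa Pb Pc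
    have hb1 : p.getVert (b - 1) ∈ ({x₁, x₂} : Set V) := by
      have hadj := p.adj_getVert_succ (i := b - 1) (by omega)
      rw [show b - 1 + 1 = b by omega] at hadj
      rw [← Pb]; exact hadj.symm
    have hb2 : p.getVert (b + 1) ∈ ({x₁, x₂} : Set V) := by
      have hadj := p.adj_getVert_succ (i := b) (by omega)
      rw [← Pb]; exact hadj
    have hneb : p.getVert (b - 1) ≠ p.getVert (b + 1) := by
      intro h
      have := inj _ _ (by omega) (by omega) h
      omega
    have locate : ∀ m, m ≤ p.length → p.getVert m ∈ ({x₁, x₂} : Set V) →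
        m = b - 1 ∨ m = b + 1 := by
      intro m hm hmem
      simp only [Set.mem_insert_iff, Set.mem_singleton_iff] at hb1 hb2 hmem
      rcases hb1 with e1 | e1 <;> rcases hb2 with e2 | e2
      · exact absurd (e1.trans e2.symm) hneb
      · rcases hmem with e3 | e3
        · exact Or.inl (inj m (b - 1) hm (by omega) (e3.trans e1.symm))
        · exact Or.inr (inj m (b + 1) hm (by omega) (e3.trans e2.symm))
      · rcases hmem with e3 | e3
        · exact Or.inr (inj m (b + 1) hm (by omega) (e3.trans e2.symm))
        · exact Or.inl (inj m (b - 1) hm (by omega) (e3.trans e1.symm))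
      · exact absurd (e1.trans e2.symm) hneb
    have ha1 : a + 1 = b - 1 ∨ a + 1 = b + 1 := by
      refine locate (a + 1) (by omega) ?_
      rw [← Pa]; exact p.adj_getVert_succ (by omega)
    have ha0 : a = 0 := by
      by_contra h'
      have := locate (a - 1) (by omega) ?_
      · omega
      · have hadj := p.adj_getVert_succ (i := a - 1) (by omega)
        rw [show a - 1 + 1 = a by omega] at hadj
        rw [← Pa]; exact hadj.symm
    have hc1 : c - 1 = b - 1 ∨ c - 1 = b + 1 := by
      refine locate (c - 1) (by omega) ?_
      have hadj := p.adj_getVert_succ (i := c - 1) (by omega)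
      rw [show c - 1 + 1 = c by omega] at hadj
      rw [← Pc]; exact hadj.symm
    have hcend : c = p.length := by
      by_contra h'
      have := locate (c + 1) (by omega) ?_
      · omega
      · rw [← Pc]; exact p.adj_getVert_succ (by omega)
    omega
  obtain ⟨a, ha, haL⟩ := Walk.mem_support_iff_exists_getVert.mp (hall v₁)
  obtain ⟨b, hb, hbL⟩ := Walk.mem_support_iff_exists_getVert.mp (hall v₂)
  obtain ⟨c, hc, hcL⟩ := Walk.mem_support_iff_exists_getVert.mp (hall v₃)
  have Pa : P a := by rw [hP]; simp only; rw [ha]; exact h1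
  have Pb : P b := by rw [hP]; simp only; rw [hb]; exact h2
  have Pc : P c := by rw [hP]; simp only; rw [hc]; exact h3
  have hab : a ≠ b := fun h => hv12 (by rw [← ha, ← hb, h])
  have hac : a ≠ c := fun h => hv13 (by rw [← ha, ← hc, h])
  have hbc : b ≠ c := fun h => hv23 (by rw [← hb, ← hc, h])
  rcases lt_trichotomy a b with h' | h' | h'
  · rcases lt_trichotomy b c with h'' | h'' | h''
    · exact main a b c h' h'' hcL Pa Pb Pc
    · exact absurd h'' hbc
    · rcases lt_trichotomy a c with h''' | h''' | h'''
      · exact main a c b h''' h'' hbL Pa Pc Pb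
      · exact absurd h''' hac
      · exact main c a b h''' h' hbL Pc Pa Pb
  · exact absurd h' hab
  · rcases lt_trichotomy a c with h'' | h'' | h''
    · exact main b a c h' h'' hcL Pb Pa Pc
    · exact absurd h'' hac
    · rcases lt_trichotomy b c with h''' | h''' | h'''
      · exact main b c a h''' h'' haL Pb Pc Pa
      · exact absurd h''' hbc
      · exact main c b a h''' h' haL Pc Pb Pa

/-- If a connected MNT graph of order n ≥ 6 has three degree-2 vertices with the same
two neighbours, then deleting those three vertices leaves a complete graph, and
e(G) = (n² − 7n + 24)/2. -/
theorem stmt_7 {V : Type*} [Fintype V] (G : SimpleGraph V)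
    (hc : G.Connected) (hG : MaxNontraceable G)
    (hn : 6 ≤ Fintype.card V)
    (v₁ v₂ v₃ x₁ x₂ : V)
    (hv12 : v₁ ≠ v₂) (hv13 : v₁ ≠ v₃) (hv23 : v₂ ≠ v₃) (hx : x₁ ≠ x₂)
    (h1 : G.neighborSet v₁ = {x₁, x₂})
    (h2 : G.neighborSet v₂ = {x₁, x₂})
    (h3 : G.neighborSet v₃ = {x₁, x₂}) :
    (∀ x y : V, x ∉ ({v₁, v₂, v₃} : Set V) → y ∉ ({v₁, v₂, v₃} : Set V) →
      x ≠ y → G.Adj x y) ∧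
    (2 * Nat.card G.edgeSet : ℤ) =
      (Fintype.card V : ℤ) ^ 2 - 7 * (Fintype.card V : ℤ) + 24 := by
  classical
  -- adjacency characterization of the vᵢ
  have adj1 : ∀ w, G.Adj v₁ w ↔ (w = x₁ ∨ w = x₂) := by
    intro w; rw [← SimpleGraph.mem_neighborSet, h1]; simp
  have adj2 : ∀ w, G.Adj v₂ w ↔ (w = x₁ ∨ w = x₂) := by
    intro w; rw [← SimpleGraph.mem_neighborSet, h2]; simp
  have adj3 : ∀ w, G.Adj v₃ w ↔ (w = x₁ ∨ w = x₂) := by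
    intro w; rw [← SimpleGraph.mem_neighborSet, h3]; simp
  -- x₁, x₂ are not among v₁,v₂,v₃
  have hx1t : x₁ ∉ ({v₁, v₂, v₃} : Set V) := by
    simp only [Set.mem_insert_iff, Set.mem_singleton_iff]
    push_neg
    exact ⟨((adj1 x₁).mpr (Or.inl rfl)).ne', ((adj2 x₁).mpr (Or.inl rfl)).ne',
      ((adj3 x₁).mpr (Or.inl rfl)).ne'⟩
  have hx2t : x₂ ∉ ({v₁, v₂, v₃} : Set V) := by
    simp only [Set.mem_insert_iff, Set.mem_singleton_iff]
    push_neg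
    exact ⟨((adj1 x₂).mpr (Or.inr rfl)).ne', ((adj2 x₂).mpr (Or.inr rfl)).ne',
      ((adj3 x₂).mpr (Or.inr rfl)).ne'⟩
  -- Part 1 : completeness outside the triple
  have hcomp : ∀ x y : V, x ∉ ({v₁, v₂, v₃} : Set V) → y ∉ ({v₁, v₂, v₃} : Set V) →
      x ≠ y → G.Adj x y := by
    intro x y hxt hyt hxy
    by_contra hadj
    have htr := hG.2 x y hxy hadj
    have hnbr : ∀ z, z ∈ ({v₁, v₂, v₃} : Set V) →
        (G ⊔ SimpleGraph.edge x y).neighborSet z = G.neighborSet z := by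
      intro z hz
      ext w'
      simp only [SimpleGraph.mem_neighborSet, SimpleGraph.sup_adj]
      refine or_iff_left ?_
      intro he
      rw [SimpleGraph.edge_adj] at he
      rcases he.1 with ⟨h', _⟩ | ⟨h', _⟩
      · exact hxt (h' ▸ hz)
      · exact hyt (h' ▸ hz)
    refine key_nontraceable (G ⊔ SimpleGraph.edge x y) hn v₁ v₂ v₃ x₁ x₂ hv12 hv13 hv23
      ?_ ?_ ?_ htr
    · rw [hnbr v₁ (by simp), h1]
    · rw [hnbr v₂ (by simp), h2]
    · rw [hnbr v₃ (by simp), h3]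
  refine ⟨hcomp, ?_⟩
  set n := Fintype.card V with hndef
  set T : Finset V := {v₁, v₂, v₃} with hT
  have hmemT : ∀ z, z ∈ T ↔ z ∈ ({v₁, v₂, v₃} : Set V) := by
    intro z; simp [hT]
  -- degrees of v₁ v₂ v₃
  have deg1 : G.degree v₁ = 2 := by
    have hnf : G.neighborFinset v₁ = {x₁, x₂} := by
      ext w; simp [SimpleGraph.mem_neighborFinset, adj1 w]
    rw [SimpleGraph.degree, hnf, Finset.card_pair hx]
  have deg2 : G.degree v₂ = 2 := by
    have hnf : G.neighborFinset v₂ = {x₁, x₂} := by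
      ext w; simp [SimpleGraph.mem_neighborFinset, adj2 w]
    rw [SimpleGraph.degree, hnf, Finset.card_pair hx]
  have deg3 : G.degree v₃ = 2 := by
    have hnf : G.neighborFinset v₃ = {x₁, x₂} := by
      ext w; simp [SimpleGraph.mem_neighborFinset, adj3 w]
    rw [SimpleGraph.degree, hnf, Finset.card_pair hx]
  -- degrees of other vertices
  have degW : ∀ w, w ∉ ({v₁, v₂, v₃} : Set V) →
      G.degree w = (n - 4) + (if w = x₁ ∨ w = x₂ then 3 else 0) := by
    intro w hwt
    have hw1 : w ≠ v₁ := by intro h; exact hwt (by simp [h])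
    have hw2 : w ≠ v₂ := by intro h; exact hwt (by simp [h])
    have hw3 : w ≠ v₃ := by intro h; exact hwt (by simp [h])
    by_cases hwx : w = x₁ ∨ w = x₂
    · have hnf : G.neighborFinset w = Finset.univ \ {w} := by
        ext z
        simp only [SimpleGraph.mem_neighborFinset, Finset.mem_sdiff, Finset.mem_univ,
          Finset.mem_singleton, true_and]
        constructor
        · exact fun h => h.ne'
        · intro hzw
          by_cases hzt : z ∈ ({v₁, v₂, v₃} : Set V)
          · rcases hzt with h | h | h
            · subst h; exact ((adj1 w).mpr hwx).symm
            · subst h; exact ((adj2 w).mpr hwx).symm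
            · simp only [Set.mem_singleton_iff] at h
              subst h; exact ((adj3 w).mpr hwx).symm
          · exact hcomp w z hwt hzt (Ne.symm hzw)
      rw [SimpleGraph.degree, hnf, Finset.card_sdiff_of_subset (Finset.subset_univ _),
        Finset.card_singleton, Finset.card_univ]
      rw [if_pos hwx]
      omega
    · have hnf : G.neighborFinset w = Finset.univ \ {w, v₁, v₂, v₃} := by
        ext z
        simp only [SimpleGraph.mem_neighborFinset, Finset.mem_sdiff, Finset.mem_univ,
          Finset.mem_insert, Finset.mem_singleton, true_and]
        constructor
        · intro h
          push_neg
          refine ⟨h.ne', ?_, ?_, ?_⟩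
          · intro hz; subst hz
            exact hwx ((adj1 w).mp h.symm)
          · intro hz; subst hz
            exact hwx ((adj2 w).mp h.symm)
          · intro hz; subst hz
            exact hwx ((adj3 w).mp h.symm)
        · intro hz
          push_neg at hz
          exact hcomp w z hwt (by simp [hz.2.1, hz.2.2.1, hz.2.2.2]) (Ne.symm hz.1)
      have hcard4 : ({w, v₁, v₂, v₃} : Finset V).card = 4 := by
        rw [Finset.card_insert_of_notMem (by simp [hw1, hw2, hw3]),
          Finset.card_insert_of_notMem (by simp [hv12, hv13]),
          Finset.card_insert_of_notMem (by simp [hv23]), Finset.card_singleton]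
      rw [SimpleGraph.degree, hnf, Finset.card_sdiff_of_subset (Finset.subset_univ _),
        hcard4, Finset.card_univ, if_neg hwx]
      omega
  -- degree sum
  have hsum := G.sum_degrees_eq_twice_card_edges
  rw [← Finset.sum_sdiff (Finset.subset_univ T)] at hsum
  have hTcard : T.card = 3 := by
    rw [hT, Finset.card_insert_of_notMem (by simp [hv12, hv13]),
      Finset.card_insert_of_notMem (by simp [hv23]), Finset.card_singleton]
  have hsumT : ∑ v ∈ T, G.degree v = 6 := by
    rw [hT, Finset.sum_insert (by simp [hv12, hv13]),
      Finset.sum_insert (by simp [hv23]), Finset.sum_singleton, deg1, deg2, deg3]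
    omega
  have hsumW : ∑ v ∈ Finset.univ \ T, G.degree v = (n - 3) * (n - 4) + 6 := by
    have hre : ∀ w ∈ Finset.univ \ T,
        G.degree w = (n - 4) + (if w = x₁ ∨ w = x₂ then 3 else 0) := by
      intro w hw
      refine degW w ?_
      rw [← hmemT]
      simpa using (Finset.mem_sdiff.mp hw).2
    rw [Finset.sum_congr rfl hre, Finset.sum_add_distrib, Finset.sum_const,
      Finset.card_sdiff_of_subset (Finset.subset_univ T), Finset.card_univ, hTcard]
    have hfil : Finset.filter (fun w => w = x₁ ∨ w = x₂) (Finset.univ \ T) = {x₁, x₂} := by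
      ext z
      simp only [Finset.mem_filter, Finset.mem_sdiff, Finset.mem_univ, true_and,
        Finset.mem_insert, Finset.mem_singleton]
      constructor
      · exact fun h => h.2
      · rintro (h | h) <;> subst h
        · exact ⟨by rw [hmemT]; exact hx1t, Or.inl rfl⟩
        · exact ⟨by rw [hmemT]; exact hx2t, Or.inr rfl⟩
    rw [← Finset.sum_filter, hfil, Finset.sum_pair hx, smul_eq_mul]
  -- combine
  rw [hsumW, hsumT] at hsum
  have hnat : 2 * Nat.card G.edgeSet = (n - 3) * (n - 4) + 12 := by
    have hE : Nat.card G.edgeSet = G.edgeFinset.card := by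
      rw [Nat.card_coe_set_eq, Set.ncard_eq_toFinset_card', SimpleGraph.edgeFinset]
    omega
  have h3n : (3 : ℕ) ≤ n := by omega
  have h4n : (4 : ℕ) ≤ n := by omega
  have hz := congrArg (Nat.cast : ℕ → ℤ) hnat
  push_cast [Nat.cast_sub h3n, Nat.cast_sub h4n] at hz
  linear_combination hz
end

section
/- Let G be a maximal nontraceable graph that is not connected. Then G has exactly two connected components, and each connected component induces a complete graph; that is, G is the disjoint union of two complete graphs. -/
open SimpleGraph

lemma traceable_connected {V : Type*} [Nonempty V] {G : SimpleGraph V}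
    (h : Traceable G) : G.Connected := by
  classical
  obtain ⟨u, v, p, hp, hsupp⟩ := h
  refine (SimpleGraph.connected_iff _).mpr ⟨fun x y => ?_, inferInstance⟩
  exact ((p.takeUntil x (hsupp x)).reachable.symm).trans (p.takeUntil y (hsupp y)).reachable

lemma reach_of_sup {V : Type*} {G : SimpleGraph V} {u v a : V}
    (h : G.Reachable a u ↔ G.Reachable a v) :
    ∀ {x y : V}, (G ⊔ SimpleGraph.edge u v).Walk x y → G.Reachable a x → G.Reachable a y := by
  intro x y w
  induction w with
  | nil => exact id
  | cons hadj p ih =>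
    intro hax
    apply ih
    rcases hadj with hadj | hadj
    · exact hax.trans hadj.reachable
    · rw [SimpleGraph.edge_adj] at hadj
      rcases hadj.1 with ⟨rfl, rfl⟩ | ⟨rfl, rfl⟩
      · exact h.mp hax
      · exact h.mpr hax

/-- A disconnected MNT graph has exactly two connected components, each of which
induces a complete graph. -/
theorem stmt_15 {V : Type*} [Fintype V] [Nonempty V] (G : SimpleGraph V)
    (hG : MaxNontraceable G) (hnc : ¬ G.Connected) :
    Nat.card G.ConnectedComponent = 2 ∧
    ∀ C : G.ConnectedComponent, ∀ x ∈ C.supp, ∀ y ∈ C.supp, x ≠ y → G.Adj x y := by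
  classical
  -- get two non-reachable vertices
  obtain ⟨a, b, hab⟩ : ∃ a b, ¬ G.Reachable a b := by
    by_contra hcon
    push_neg at hcon
    exact hnc ((SimpleGraph.connected_iff _).mpr ⟨fun x y => hcon x y, inferInstance⟩)
  have hne : a ≠ b := fun h => hab (h ▸ SimpleGraph.Reachable.refl a)
  have hnadj : ¬ G.Adj a b := fun h => hab h.reachable
  -- completeness of components
  have hcomp : ∀ C : G.ConnectedComponent, ∀ x ∈ C.supp, ∀ y ∈ C.supp, x ≠ y → G.Adj x y := by
    intro C x hx y hy hxy
    by_contra hnadj'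
    have hxy' : G.Reachable x y := by
      rw [SimpleGraph.ConnectedComponent.mem_supp_iff] at hx hy
      exact (SimpleGraph.ConnectedComponent.eq).mp (hx.trans hy.symm)
    have htr := hG.2 x y hxy hnadj'
    have hconn := traceable_connected htr
    obtain ⟨w⟩ := hconn.preconnected a b
    have hiff : ∀ c : V, (G.Reachable c x ↔ G.Reachable c y) :=
      fun c => ⟨fun h => h.trans hxy', fun h => h.trans hxy'.symm⟩
    exact hab (reach_of_sup (hiff a) w (SimpleGraph.Reachable.refl a))
  refine ⟨?_, hcomp⟩
  rw [Nat.card_eq_two_iff]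
  refine ⟨G.connectedComponentMk a, G.connectedComponentMk b, ?_, ?_⟩
  · intro h
    exact hab ((SimpleGraph.ConnectedComponent.eq).mp h)
  · apply Set.eq_univ_of_forall
    intro C
    induction C using SimpleGraph.ConnectedComponent.ind with
    | _ c =>
      by_contra hC
      simp only [Set.mem_insert_iff, Set.mem_singleton_iff] at hC
      push_neg at hC
      have hca : ¬ G.Reachable c a := fun h =>
        hC.1 ((SimpleGraph.ConnectedComponent.eq).mpr h)
      have hcb : ¬ G.Reachable c b := fun h =>
        hC.2 ((SimpleGraph.ConnectedComponent.eq).mpr h)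
      have htr := hG.2 a b hne hnadj
      have hconn := traceable_connected htr
      obtain ⟨w⟩ := hconn.preconnected c a
      exact hca (reach_of_sup (iff_of_false hca hcb) w (SimpleGraph.Reachable.refl c))
end

section
/- Let G be a connected maximal nontraceable graph and let S be the set of vertices v of G such that either v has degree 1, or v has degree 2 and some neighbour of v has degree at most 2. Then every connected component H of the subgraph of G induced by S has at most two vertices, all vertices of H are pairwise adjacent, and there is exactly one vertex y of G outside H that is adjacent to a vertex of H; moreover, deleting y disconnects G (y is a cut-vertex of G). -/
/-!
In a maximal nontraceable graph the two neighbours `a, b` of a vertex `v` of degree 2 are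
adjacent: otherwise a Hamiltonian path of `G + ab` uses the edge `ab`, and since `v` can only be
joined to `a` and `b`, it is an end of that path sitting next to `ab`; the path `v a b ⋯` is then
rerouted as `a v b ⋯` inside `G`.

Hence a vertex of degree 1 hangs off a vertex `w` of degree at least 3, and a vertex `v` of
degree 2 with a neighbour `u` of degree at most 2 lies in a triangle `v u b` with
`N(v) = {u, b}` and `N(u) = {v, b}`. Since `G` is connected and not traceable, neither `{v, w}`
nor `{v, u, b}` is all of `G`, so `w` (resp. `b`) has a further neighbour. Every component of the
graph induced by `S` is therefore a clique `{v}` or `{v, u}` whose only outside neighbour is a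
vertex of degree at least 3, which separates it from the rest of `G`.
-/

open SimpleGraph

theorem Set.exists_ne_eq_pair_of_ncard_eq_two {α : Type*} {s : Set α} {a : α}
    (hs : s.ncard = 2) (ha : a ∈ s) : ∃ b, a ≠ b ∧ s = {a, b} := by
  obtain ⟨x, y, hxy, rfl⟩ := Set.ncard_eq_two.mp hs
  rcases ha with rfl | rfl
  · exact ⟨y, hxy, rfl⟩
  · exact ⟨x, hxy.symm, Set.pair_comm _ _⟩

theorem List.eq_singleton_of_isChain_append {α : Type*} {R : α → α → Prop} {l₁ l₂ : List α}
    {v : α} (hch : (l₁ ++ l₂).IsChain R) (hnd : (l₁ ++ l₂).Nodup) (hv : v ∈ l₁)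
    (hR : ∀ w, R v w ∨ R w v → w ∈ l₂) : l₁ = [v] := by
  have hdisj := (nodup_append.mp hnd).2.2
  have hrel := isChain_iff_forall_rel_of_append_cons_cons.mp hch
  obtain ⟨s, t, rfl⟩ := append_of_mem hv
  cases t with
  | cons c t =>
    have hc : c ∈ l₂ := hR c (.inl (hrel (l₁ := s) (l₂ := t ++ l₂) (by simp)))
    exact absurd rfl (hdisj c (by simp) c hc)
  | nil =>
    rcases eq_nil_or_concat s with rfl | ⟨s, p, rfl⟩
    · rfl
    · have hp : p ∈ l₂ := hR p (.inr (hrel (l₁ := s) (l₂ := l₂) (by simp)))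
      exact absurd rfl (hdisj p (by simp) p hp)

section

variable {V : Type*} {G : SimpleGraph V}

theorem traceable_iff_exists_list :
    Traceable G ↔ ∃ l : List V, l ≠ [] ∧ l.Nodup ∧ l.IsChain G.Adj ∧ ∀ v, v ∈ l := by
  constructor
  · rintro ⟨u, v, p, hp, hall⟩
    exact ⟨p.support, p.support_ne_nil, hp.support_nodup, p.isChain_adj_support, hall⟩
  · rintro ⟨l, hne, hnd, hch, hall⟩
    exact ⟨_, _, Walk.ofSupport l hne hch, by rwa [Walk.isPath_def, Walk.support_ofSupport],
      by simpa using hall⟩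

theorem SimpleGraph.isChain_of_isChain_sup_edge {l : List V} {x y : V}
    (hch : l.IsChain (G ⊔ edge x y).Adj) (hx : x ∉ l) : l.IsChain G.Adj :=
  hch.imp_of_mem_imp fun a b ha hb hab => by
    rcases (sup_adj _ _ _ _).mp hab with h | h
    · exact h
    · rw [edge_adj] at h
      rcases h.1 with ⟨rfl, -⟩ | ⟨-, rfl⟩
      exacts [absurd ha hx, absurd hb hx]

theorem traceable_of_isChain_sup_edge_of_mem_left {v x y : V}
    (hv : G.neighborSet v = {x, y}) {l₁ l₂ : List V} (hnd : (l₁ ++ x :: y :: l₂).Nodup)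
    (hch : (l₁ ++ x :: y :: l₂).IsChain (G ⊔ edge x y).Adj)
    (hall : ∀ w, w ∈ l₁ ++ x :: y :: l₂) (hvl : v ∈ l₁) : Traceable G := by
  have hNv : ∀ w, G.Adj v w ↔ w = x ∨ w = y := fun w => by
    rw [← mem_neighborSet, hv]; rfl
  have hvx : G.Adj v x := (hNv x).mpr (.inl rfl)
  have hvy : G.Adj v y := (hNv y).mpr (.inr rfl)
  have hN : ∀ w, (G ⊔ edge x y).Adj v w ∨ (G ⊔ edge x y).Adj w v → w ∈ x :: y :: l₂ := by
    intro w hw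
    replace hw : (G ⊔ edge x y).Adj v w := hw.elim id (·.symm)
    rcases (sup_adj _ _ _ _).mp hw with h | h
    · rcases (hNv w).mp h with rfl | rfl <;> simp
    · rw [edge_adj] at h
      rcases h.1 with ⟨rfl, -⟩ | ⟨rfl, -⟩
      exacts [absurd hvx (G.irrefl), absurd hvy (G.irrefl)]
  obtain rfl := List.eq_singleton_of_isChain_append hch hnd hvl hN
  have hperm : (x :: v :: y :: l₂).Perm ([v] ++ x :: y :: l₂) := List.Perm.swap v x _
  have hx : x ∉ y :: l₂ := (List.nodup_cons.mp (List.nodup_append.mp hnd).2.1).1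
  refine traceable_iff_exists_list.mpr ⟨x :: v :: y :: l₂, by simp, hperm.nodup_iff.mpr hnd,
    .cons_cons hvx.symm (.cons_cons hvy ?_), fun w => hperm.mem_iff.mpr (hall w)⟩
  exact isChain_of_isChain_sup_edge hch.right_of_append.tail hx


theorem MaxNontraceable.adj_of_neighborSet_eq_pair (hG : MaxNontraceable G) {v a b : V}
    (hab : a ≠ b) (hv : G.neighborSet v = {a, b}) : G.Adj a b := by
  by_contra hnab
  obtain ⟨l, -, hnd, hch, hall⟩ := traceable_iff_exists_list.mp (hG.2 a b hab hnab)
  obtain ⟨x, y, l₁, l₂, rfl, hxy⟩ : ∃ x y l₁ l₂, l = l₁ ++ x :: y :: l₂ ∧ ¬G.Adj x y := by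
    by_contra! h
    exact hG.1 (traceable_iff_exists_list.mpr ⟨l, List.ne_nil_of_mem (hall a), hnd,
      List.isChain_iff_forall_rel_of_append_cons_cons.mpr fun x y l₁ l₂ => h x y l₁ l₂, hall⟩)
  obtain ⟨hG', hv'⟩ : G ⊔ edge a b = G ⊔ edge x y ∧ G.neighborSet v = {x, y} := by
    have h := List.isChain_iff_forall_rel_of_append_cons_cons.mp hch rfl
    rcases (sup_adj _ _ _ _).mp h with h | h
    · exact absurd h hxy
    · rw [edge_adj] at h
      rcases h.1 with ⟨rfl, rfl⟩ | ⟨rfl, rfl⟩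
      · exact ⟨rfl, hv⟩
      · exact ⟨by rw [edge_comm], by rw [hv, Set.pair_comm]⟩
  rw [hG'] at hch
  have hvl : v ∈ l₁ ∨ v ∈ l₂ := by
    have hvx : G.Adj v x := by rw [← mem_neighborSet, hv']; exact .inl rfl
    have hvy : G.Adj v y := by rw [← mem_neighborSet, hv']; exact .inr rfl
    have := hall v
    simp only [List.mem_append, List.mem_cons] at this
    rcases this with h | rfl | rfl | h
    exacts [.inl h, absurd hvx G.irrefl, absurd hvy G.irrefl, .inr h]
  rcases hvl with hvl | hvl
  · exact hG.1 (traceable_of_isChain_sup_edge_of_mem_left hv' hnd hch hall hvl)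
  · have hrev : (l₁ ++ x :: y :: l₂).reverse = l₂.reverse ++ y :: x :: l₁.reverse := by simp
    rw [edge_comm] at hch
    refine hG.1 (traceable_of_isChain_sup_edge_of_mem_left (by rw [hv', Set.pair_comm])
      (hrev ▸ List.nodup_reverse.mpr hnd) (hrev ▸ List.isChain_reverse.mpr (hch.imp fun _ _ h => h.symm))
      (fun w => hrev ▸ List.mem_reverse.mpr (hall w)) (List.mem_reverse.mpr hvl))

theorem SimpleGraph.Reachable.mem_of_forall_adj_mem {A : Set V}
    (hA : ∀ x ∈ A, ∀ z, G.Adj x z → z ∈ A) {u w : V} (h : G.Reachable u w) (hu : u ∈ A) :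
    w ∈ A := by
  by_contra hw
  obtain ⟨p⟩ := h
  obtain ⟨d, -, hd, hd'⟩ := p.exists_boundary_dart A hu hw
  exact hd' (hA _ hd _ d.adj)

theorem SimpleGraph.Connected.exists_adj_notMem_of_not_traceable (hc : G.Connected)
    (hnt : ¬Traceable G) {l : List V} (hne : l ≠ []) (hnd : l.Nodup) (hch : l.IsChain G.Adj) :
    ∃ x ∈ l, ∃ z, G.Adj x z ∧ z ∉ l := by
  by_contra! h
  obtain ⟨x, hx⟩ := List.exists_mem_of_ne_nil l hne
  exact hnt (traceable_iff_exists_list.mpr ⟨l, hne, hnd, hch,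
    fun w => (hc.preconnected x w).mem_of_forall_adj_mem (A := {z | z ∈ l}) h hx⟩)

structure SimpleGraph.IsPendantClique (G : SimpleGraph V) (T : Set V) (y : V) : Prop where
  isClique : G.IsClique T
  notMem : y ∉ T
  adj_mem : ∀ x ∈ T, ∀ z, G.Adj x z → z ∈ T ∨ z = y
  exists_adj : ∃ x ∈ T, G.Adj y x
  exists_adj_notMem : ∃ c, G.Adj y c ∧ c ∉ T

namespace SimpleGraph.IsPendantClique

variable {T : Set V} {y : V}

theorem eq_of_adj (hT : G.IsPendantClique T y) {x z : V} (hz : z ∉ T) (hx : x ∈ T)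
    (hzx : G.Adj z x) : z = y :=
  (hT.adj_mem x hx z hzx.symm).resolve_left hz

theorem not_connected_induce_compl (hT : G.IsPendantClique T y) :
    ¬(G.induce {y}ᶜ).Connected := by
  intro hconn
  obtain ⟨v, hvT, hyv⟩ := hT.exists_adj
  obtain ⟨c, hyc, hcT⟩ := hT.exists_adj_notMem
  have hreach := hconn.preconnected ⟨v, hyv.ne'⟩ ⟨c, hyc.ne'⟩
  refine hcT (hreach.mem_of_forall_adj_mem (A := {z : ({y}ᶜ : Set V) | (z : V) ∈ T}) ?_ hvT)
  rintro ⟨x, _⟩ hx ⟨z, hzy⟩ hxz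
  exact (hT.adj_mem x hx z (by simpa using hxz)).resolve_right hzy

theorem image_supp_connectedComponentMk (hT : G.IsPendantClique T y) {S : Set V}
    (hTS : T ⊆ S) (hyS : y ∉ S) {v : S} (hv : ↑v ∈ T) :
    Subtype.val '' ((G.induce S).connectedComponentMk v).supp = T := by
  ext w
  constructor
  · rintro ⟨z, hz, rfl⟩
    have hreach : (G.induce S).Reachable v z := (ConnectedComponent.eq.mp hz).symm
    refine hreach.mem_of_forall_adj_mem (A := {z : S | (z : V) ∈ T}) ?_ hv
    rintro ⟨x, _⟩ hx ⟨z, hzS⟩ hxz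
    exact (hT.adj_mem x hx z (by simpa using hxz)).resolve_right (by rintro rfl; exact hyS hzS)
  · intro hw
    refine ⟨⟨w, hTS hw⟩, ?_, rfl⟩
    rw [ConnectedComponent.mem_supp_iff, ConnectedComponent.eq]
    by_cases hwv : w = v
    · obtain rfl : (⟨w, hTS hw⟩ : S) = v := Subtype.ext hwv
      rfl
    · exact Adj.reachable (by simpa using hT.isClique hw hv hwv)

end SimpleGraph.IsPendantClique

variable [Finite V]

theorem MaxNontraceable.exists_isPendantClique_of_card_neighborSet_eq_one
    (hG : MaxNontraceable G) (hc : G.Connected) {v : V} (hv : Nat.card (G.neighborSet v) = 1) :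
    ∃ y, G.IsPendantClique {v} y ∧ 3 ≤ Nat.card (G.neighborSet y) := by
  obtain ⟨w, hw⟩ := Set.ncard_eq_one.mp ((Nat.card_coe_set_eq _).symm.trans hv)
  have hNv : ∀ z, G.Adj v z ↔ z = w := fun z => by rw [← mem_neighborSet, hw]; rfl
  have hvw : G.Adj v w := (hNv w).mpr rfl
  obtain ⟨x, hx, c, hxc, hcl⟩ := hc.exists_adj_notMem_of_not_traceable hG.1 (l := [v, w])
    (by simp) (by simp [hvw.ne]) (by simp [hvw])
  simp only [List.mem_cons, List.not_mem_nil, or_false, not_or] at hx hcl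
  obtain rfl : x = w := hx.resolve_left (by rintro rfl; exact hcl.2 ((hNv c).mp hxc))
  refine ⟨x, ⟨isClique_singleton v, hvw.ne', ?_, ⟨v, rfl, hvw.symm⟩, ⟨c, hxc, hcl.1⟩⟩, ?_⟩
  · rintro _ rfl z hz
    exact .inr ((hNv z).mp hz)
  have hsub : {v, c} ⊆ G.neighborSet x := by
    rintro _ (rfl | rfl)
    exacts [hvw.symm, hxc]
  have hle : 2 ≤ (G.neighborSet x).ncard :=
    Set.ncard_pair (Ne.symm hcl.1) ▸ Set.ncard_le_ncard hsub (Set.toFinite _)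
  have hne : (G.neighborSet x).ncard ≠ 2 := fun h2 => by
    have heq := Set.eq_of_subset_of_ncard_le hsub (by rw [h2, Set.ncard_pair (Ne.symm hcl.1)])
      (Set.toFinite _)
    exact hcl.2 ((hNv c).mp (hG.adj_of_neighborSet_eq_pair (Ne.symm hcl.1) heq.symm))
  rw [Nat.card_coe_set_eq]
  omega

theorem MaxNontraceable.exists_isPendantClique_of_card_neighborSet_eq_two
    (hG : MaxNontraceable G) (hc : G.Connected) {v u : V} (hv : Nat.card (G.neighborSet v) = 2)
    (hvu : G.Adj v u) (hu : Nat.card (G.neighborSet u) ≤ 2) :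
    ∃ y, G.IsPendantClique {v, u} y ∧ 3 ≤ Nat.card (G.neighborSet y) ∧
      Nat.card (G.neighborSet u) = 2 := by
  rw [Nat.card_coe_set_eq] at hv hu ⊢
  obtain ⟨b, hub, hNv⟩ := Set.exists_ne_eq_pair_of_ncard_eq_two hv hvu
  have hadj_ub : G.Adj u b := hG.adj_of_neighborSet_eq_pair hub hNv
  have hvb : G.Adj v b := by rw [← mem_neighborSet, hNv]; exact .inr rfl
  have hNu : G.neighborSet u = {v, b} := by
    refine (Set.eq_of_subset_of_ncard_le ?_ (by rwa [Set.ncard_pair hvb.ne]) (Set.toFinite _)).symm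
    rintro _ (rfl | rfl)
    exacts [hvu.symm, hadj_ub]
  obtain ⟨x, hx, c, hxc, hcl⟩ := hc.exists_adj_notMem_of_not_traceable hG.1 (l := [u, v, b])
    (by simp) (by simp [hvu.ne', hub, hvb.ne]) (by simp [hvu.symm, hvb])
  simp only [List.mem_cons, List.not_mem_nil, or_false, not_or] at hx hcl
  obtain rfl : x = b := by
    rcases hx with rfl | rfl | rfl
    · rw [← mem_neighborSet, hNu] at hxc
      rcases hxc with rfl | rfl <;> simp at hcl
    · rw [← mem_neighborSet, hNv] at hxc
      rcases hxc with rfl | rfl <;> simp at hcl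
    · rfl
  refine ⟨x, ⟨isClique_pair.mpr fun _ => hvu, ?_, ?_, ⟨v, .inl rfl, hvb.symm⟩,
    ⟨c, hxc, by simp [hcl.1, hcl.2.1]⟩⟩, ?_, by rw [hNu, Set.ncard_pair hvb.ne]⟩
  · rintro (h | h)
    exacts [hvb.ne h.symm, hub h.symm]
  · rintro _ (rfl | rfl) z hz
    · rw [← mem_neighborSet, hNv] at hz
      rcases hz with rfl | rfl <;> simp
    · rw [← mem_neighborSet, hNu] at hz
      rcases hz with rfl | rfl <;> simp
  · have hsub : {v, u, c} ⊆ G.neighborSet x := by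
      rintro _ (rfl | rfl | rfl)
      exacts [hvb.symm, hadj_ub.symm, hxc]
    have h3 : ({v, u, c} : Set V).ncard = 3 :=
      Set.ncard_eq_three.mpr ⟨v, u, c, hvu.ne, Ne.symm hcl.2.1, Ne.symm hcl.1, rfl⟩
    exact h3 ▸ Set.ncard_le_ncard hsub (Set.toFinite _)

end

/-- Let S be the set of vertices of a connected MNT graph G that have degree 1, or
degree 2 with a neighbour of degree at most 2. Then every component H of the
subgraph induced by S has at most two, pairwise adjacent, vertices, and exactly one
vertex of G outside H is adjacent to a vertex of H; moreover that vertex is a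
cut-vertex of G. -/
theorem stmt_17 {V : Type*} [Fintype V] (G : SimpleGraph V)
    (hc : G.Connected) (hG : MaxNontraceable G)
    (S : Set V)
    (hS : S = {v : V | Nat.card (G.neighborSet v) = 1 ∨
      (Nat.card (G.neighborSet v) = 2 ∧
        ∃ u, G.Adj v u ∧ Nat.card (G.neighborSet u) ≤ 2)}) :
    ∀ H : (G.induce S).ConnectedComponent,
      Nat.card H.supp ≤ 2 ∧
      (∀ x ∈ Subtype.val '' H.supp, ∀ y ∈ Subtype.val '' H.supp, x ≠ y → G.Adj x y) ∧
      ∃ y : V, y ∉ Subtype.val '' H.supp ∧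
        (∃ x ∈ Subtype.val '' H.supp, G.Adj y x) ∧
        (∀ z : V, z ∉ Subtype.val '' H.supp →
          (∃ x ∈ Subtype.val '' H.supp, G.Adj z x) → z = y) ∧
        ¬ (G.induce ({y}ᶜ : Set V)).Connected := by
  intro H
  induction H using ConnectedComponent.ind with | h v => ?_
  obtain ⟨T, y, hvT, hTS, hTcard, hT, hy⟩ : ∃ T y, ↑v ∈ T ∧ T ⊆ S ∧ T.ncard ≤ 2 ∧
      G.IsPendantClique T y ∧ 3 ≤ Nat.card (G.neighborSet y) := by
    have hvS := v.2
    simp only [hS] at hvS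
    rcases hvS with h1 | ⟨h2, u, hvu, hu⟩
    · obtain ⟨y, hT, hy⟩ := hG.exists_isPendantClique_of_card_neighborSet_eq_one hc h1
      exact ⟨{↑v}, y, rfl, Set.singleton_subset_iff.mpr v.2, by simp, hT, hy⟩
    · obtain ⟨y, hT, hy, hu2⟩ := hG.exists_isPendantClique_of_card_neighborSet_eq_two hc h2 hvu hu
      have huS : u ∈ S := by rw [hS]; exact .inr ⟨hu2, v, hvu.symm, h2.le⟩
      exact ⟨{↑v, u}, y, .inl rfl, Set.insert_subset v.2 (Set.singleton_subset_iff.mpr huS),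
        (Set.ncard_insert_le _ _).trans (by simp), hT, hy⟩
  have hyS : y ∉ S := by
    rw [hS]
    rintro (h | ⟨h, -⟩) <;> omega
  have himg := hT.image_supp_connectedComponentMk hTS hyS hvT
  rw [← Nat.card_image_of_injective Subtype.val_injective, himg, Nat.card_coe_set_eq]
  exact ⟨hTcard, hT.isClique, y, hT.notMem, hT.exists_adj,
    fun z hz ⟨x, hx, hzx⟩ => hT.eq_of_adj hz hx hzx, hT.not_connected_induce_compl⟩
end
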